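/- Fix p ∈ (−1, ∞) \ {0} and λ ∈ (0, 1). There exist m₀ > 0 and C > 0 such that for every m with 0 < m < m₀ (so that in particular λ(1+m)² ≤ 1), every minimiser μ* over μ ∈ ℝ of the function μ ↦ sgn(p)·∫_{−1}^{1} (1 − λ(z−m)²)·|z − μ|^p dz satisfies |μ* − 2λm/((p+1) − (p−1)λ)| ≤ C·m³. In particular, for fixed λ the leading coefficient 2λ/((p+1) − (p−1)λ) tends to 1 as p → −1⁺ (the minimiser approaches the mode m) and tends to 2λ/(1+λ) < 1 as p → 0 (the minimiser does not approach the mode). -/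

import Mathlib

/-!
For `μ ∈ [-1, 1]` the moment `∫ γ(z) |z - μ|^p dz` is an explicit expression `F(m, μ)`, because
`γ` is quadratic; write `E = ∂F/∂μ`. When `m = 0` the density is even, so `E(0, 0) = 0`, while
`p · ∂E/∂μ (0, 0) = 2p²((p+1) - (p-1)λ)/(p+1) > 0`. So near the origin `p · E` increases in `μ`
at a rate bounded below. Along the line `μ = κm` with `κ = 2λ/((p+1) - (p-1)λ)`, the function
`m ↦ E(m, κm)` is odd (reflect `z ↦ -z`), and `κ` is exactly the slope that makes its
derivative at `0` vanish, so it is `O(m³)`. Hence `p · E(m, μ) > 0` for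
`κm + C|m|³ ≤ μ < 1`; away from the origin this comes from a direct estimate. So the loss
`p · F` strictly increases on `[κm + C|m|³, 1]`, and no `μ > 1` does better than `μ = 1`. By the
reflection symmetry, the same bound holds on the left of `κm`.
-/

open Set Filter Topology Asymptotics MeasureTheory

theorem Function.Odd.even_deriv {f : ℝ → ℝ} (hf : f.Odd) : (deriv f).Even := by
  intro x
  have h := congrArg (fun g => deriv g x) (funext hf : (fun y => f (-y)) = fun y => -f y)
  simp only [deriv_comp_neg, deriv.fun_neg', neg_inj] at h
  exact h

theorem Function.Even.odd_deriv {f : ℝ → ℝ} (hf : f.Even) : (deriv f).Odd := by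
  intro x
  have h := congrArg (fun g => deriv g x) (funext hf : (fun y => f (-y)) = f)
  simp only [deriv_comp_neg] at h
  linarith

theorem isBigO_pow_succ_of_hasDerivAt {f f' : ℝ → ℝ} {n : ℕ} (h0 : f 0 = 0)
    (hf : ∀ᶠ x in 𝓝 0, HasDerivAt f (f' x) x) (hf' : f' =O[𝓝 0] (· ^ n)) :
    f =O[𝓝 0] (· ^ (n + 1)) := by
  obtain ⟨K, hK, hKf'⟩ := hf'.exists_pos
  obtain ⟨δ, hδ, hball⟩ := Metric.eventually_nhds_iff_ball.mp (hf.and hKf'.bound)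
  refine IsBigO.of_bound K (Metric.eventually_nhds_iff_ball.mpr ⟨δ, hδ, fun x hx => ?_⟩)
  have hsub : Metric.closedBall (0 : ℝ) ‖x‖ ⊆ Metric.ball 0 δ :=
    Metric.closedBall_subset_ball (by simpa using hx)
  have hmvt := (convex_closedBall (0 : ℝ) ‖x‖).norm_image_sub_le_of_norm_hasDerivWithin_le
    (f := f) (C := K * ‖x‖ ^ n) (x := 0) (y := x)
    (fun y hy => (hball y (hsub hy)).1.hasDerivWithinAt)
    (fun y hy => by
      have hy' : ‖y‖ ≤ ‖x‖ := by simpa using hy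
      calc ‖f' y‖ ≤ K * ‖y ^ n‖ := (hball y (hsub hy)).2
        _ ≤ K * ‖x‖ ^ n := by rw [norm_pow]; gcongr)
    (Metric.mem_closedBall_self (norm_nonneg x)) (by simp)
  simpa [h0, norm_pow, pow_succ, mul_assoc] using hmvt

/-- Oddness kills `f 0` and `f'' 0`, so two integrations of `f'' = O(x)` give `f = O(x³)`. -/
theorem Function.Odd.isBigO_pow_three {f : ℝ → ℝ} {s : Set ℝ} (hodd : f.Odd) (hs : IsOpen s)
    (h0 : (0 : ℝ) ∈ s) (hf : ContDiffOn ℝ 3 f s) (hf' : deriv f 0 = 0) :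
    f =O[𝓝 0] (· ^ 3) := by
  have hf1 : ContDiffOn ℝ 2 (deriv f) s := hf.deriv_of_isOpen hs (by norm_num)
  have hf2 : ContDiffOn ℝ 1 (deriv (deriv f)) s := hf1.deriv_of_isOpen hs (by norm_num)
  have hderiv {g : ℝ → ℝ} {k : WithTop ℕ∞} (hg : ContDiffOn ℝ k g s) (hk : k ≠ 0) :
      ∀ᶠ x in 𝓝 0, HasDerivAt g (deriv g x) x :=
    Filter.mem_of_superset (hs.mem_nhds h0) fun x hx =>
      ((hg.contDiffAt (hs.mem_nhds hx)).differentiableAt hk).hasDerivAt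
  have h2 : deriv (deriv f) =O[𝓝 0] (· ^ 1) := by
    have := ((hf2.contDiffAt (hs.mem_nhds h0)).differentiableAt one_ne_zero).isBigO_sub
    simpa [hodd.even_deriv.odd_deriv.map_zero] using this
  have h1 := isBigO_pow_succ_of_hasDerivAt hf' (hderiv hf1 two_ne_zero) h2
  exact isBigO_pow_succ_of_hasDerivAt hodd.map_zero (hderiv hf (by norm_num)) h1

theorem hasDerivAt_one_add_rpow (q : ℝ) {x : ℝ} (hx : -1 < x) :
    HasDerivAt (fun t => (1 + t) ^ q) (q * (1 + x) ^ (q - 1)) x := by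
  simpa using ((hasDerivAt_id x).const_add 1).rpow_const (p := q) (Or.inl (by simp; linarith))

theorem hasDerivAt_one_sub_rpow (q : ℝ) {x : ℝ} (hx : x < 1) :
    HasDerivAt (fun t => (1 - t) ^ q) (-(q * (1 - x) ^ (q - 1))) x := by
  simpa using ((hasDerivAt_id x).const_sub 1).rpow_const (p := q) (Or.inl (by simp; linarith))

theorem mul_rpow_le_mul_rpow {p a b : ℝ} (ha : 0 < a) (hab : a ≤ b) :
    p * a ^ p ≤ p * b ^ p := by
  rcases le_or_gt 0 p with hp | hp
  · exact mul_le_mul_of_nonneg_left (Real.rpow_le_rpow ha.le hab hp) hp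
  · exact mul_le_mul_of_nonpos_left (Real.rpow_le_rpow_of_nonpos ha hab hp.le) hp.le

theorem mul_rpow_lt_mul_rpow {p a b : ℝ} (hp : p ≠ 0) (ha : 0 < a) (hab : a < b) :
    p * a ^ p < p * b ^ p := by
  rcases lt_or_gt_of_ne hp with hp | hp
  · exact mul_lt_mul_of_neg_left (Real.rpow_lt_rpow_of_neg ha hab hp) hp
  · exact mul_lt_mul_of_pos_left (Real.rpow_lt_rpow ha.le hab hp) hp

theorem sign_mul_le_sign_mul_iff {p x y : ℝ} (hp : p ≠ 0) :
    Real.sign p * x ≤ Real.sign p * y ↔ p * x ≤ p * y := by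
  rcases lt_or_gt_of_ne hp with hp | hp
  · rw [Real.sign_of_neg hp]
    constructor <;> intro h <;> nlinarith
  · rw [Real.sign_of_pos hp, one_mul, one_mul]
    exact (mul_le_mul_iff_right₀ hp).symm

theorem integral_quadratic_mul_rpow {p : ℝ} (hp : -1 < p) (a b c : ℝ) {u : ℝ} (hu : 0 ≤ u) :
    ∫ t in (0 : ℝ)..u, (a + b * t + c * t ^ 2) * t ^ p =
      a * u ^ (p + 1) / (p + 1) + b * u ^ (p + 2) / (p + 2) + c * u ^ (p + 3) / (p + 3) := by
  have hint (q : ℝ) (hq : -1 < q) (k : ℝ) :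
      IntervalIntegrable (fun t => k * t ^ q) volume 0 u :=
    (intervalIntegral.intervalIntegrable_rpow' hq).const_mul k
  have hpow (q : ℝ) (hq : -1 < q) (k : ℝ) :
      ∫ t in (0 : ℝ)..u, k * t ^ q = k * u ^ (q + 1) / (q + 1) := by
    rw [intervalIntegral.integral_const_mul, integral_rpow (Or.inl hq),
      Real.zero_rpow (by linarith)]
    ring
  have hsplit : EqOn (fun t => (a + b * t + c * t ^ 2) * t ^ p)
      (fun t => a * t ^ p + b * t ^ (p + 1) + c * t ^ (p + 2)) (uIcc 0 u) := by
    intro t ht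
    have ht0 : 0 ≤ t := by rw [uIcc_of_le hu] at ht; exact ht.1
    simp only
    rw [Real.rpow_add_one' ht0 (by linarith), show p + 2 = (p + 1) + 1 by ring,
      Real.rpow_add_one' ht0 (by linarith), Real.rpow_add_one' ht0 (by linarith)]
    ring
  rw [intervalIntegral.integral_congr hsplit,
    intervalIntegral.integral_add ((hint p hp a).add (hint _ (by linarith) b))
      (hint _ (by linarith) c),
    intervalIntegral.integral_add (hint p hp a) (hint _ (by linarith) b),
    hpow p hp, hpow _ (by linarith), hpow _ (by linarith)]
  ring_nf

theorem intervalIntegrable_abs_sub_rpow {p : ℝ} (hp : -1 < p) (ν a b : ℝ) :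
    IntervalIntegrable (fun z => |z - ν| ^ p) volume a b := by
  have h0 (c : ℝ) : IntervalIntegrable (fun x => |x| ^ p) volume 0 c := by
    rcases le_total 0 c with hc | hc
    · refine (intervalIntegral.intervalIntegrable_rpow' hp).congr fun x hx => ?_
      rw [uIoc_of_le hc] at hx
      simp [abs_of_pos hx.1]
    · rw [IntervalIntegrable.iff_comp_neg, neg_zero]
      refine (intervalIntegral.intervalIntegrable_rpow' hp).congr fun x hx => ?_
      rw [uIoc_of_le (by linarith)] at hx
      simp [abs_of_pos hx.1]
  simpa using ((h0 (a - ν)).symm.trans (h0 (b - ν))).comp_sub_right ν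

noncomputable section

namespace QuadraticDensity

/-- The order-`p` loss is `Real.sign p * moment`; comparing `p * moment` instead has the same
minimisers and avoids case splits on the sign of `p`. -/
def moment (p lam m μ : ℝ) : ℝ :=
  ∫ z in (-1 : ℝ)..1, (1 - lam * (z - m) ^ 2) * |z - μ| ^ p

def momentFormula (p lam m μ : ℝ) : ℝ :=
  (1 - lam * (μ - m) ^ 2) * ((1 + μ) ^ (p + 1) + (1 - μ) ^ (p + 1)) / (p + 1)
    + 2 * lam * (μ - m) * ((1 + μ) ^ (p + 2) - (1 - μ) ^ (p + 2)) / (p + 2)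
    - lam * ((1 + μ) ^ (p + 3) + (1 - μ) ^ (p + 3)) / (p + 3)

def momentFormulaDeriv (p lam m μ : ℝ) : ℝ :=
  (1 - lam * (μ - m) ^ 2) * ((1 + μ) ^ p - (1 - μ) ^ p)
    + 2 * lam * p / (p + 1) * (μ - m) * ((1 + μ) ^ (p + 1) + (1 - μ) ^ (p + 1))
    - lam * p / (p + 2) * ((1 + μ) ^ (p + 2) - (1 - μ) ^ (p + 2))

def momentFormulaDeriv2 (p lam m μ : ℝ) : ℝ :=
  (1 - lam * (μ - m) ^ 2) * p * ((1 + μ) ^ (p - 1) + (1 - μ) ^ (p - 1))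
    + 2 * lam * (p - 1) * (μ - m) * ((1 + μ) ^ p - (1 - μ) ^ p)
    - lam * p * (p - 1) / (p + 1) * ((1 + μ) ^ (p + 1) + (1 - μ) ^ (p + 1))

def meanSlope (p lam : ℝ) : ℝ := 2 * lam / ((p + 1) - (p - 1) * lam)

variable {p lam : ℝ}

theorem meanSlope_denom_pos (hp : -1 < p) (hlam0 : 0 ≤ lam) (hlam1 : lam < 1) :
    0 < (p + 1) - (p - 1) * lam := by
  nlinarith

theorem continuousAt_meanSlope {q : ℝ} (h : (q + 1) - (q - 1) * lam ≠ 0) :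
    ContinuousAt (fun q => meanSlope q lam) q := by
  unfold meanSlope
  fun_prop (disch := exact h)

theorem intervalIntegrable_density_mul (hp : -1 < p) (m ν a b : ℝ) :
    IntervalIntegrable (fun z => (1 - lam * (z - m) ^ 2) * |z - ν| ^ p) volume a b :=
  (intervalIntegrable_abs_sub_rpow hp ν a b).continuousOn_mul (by fun_prop)

theorem moment_eq_momentFormula (hp : -1 < p) (m : ℝ) {μ : ℝ} (hμ : μ ∈ Icc (-1) 1) :
    moment p lam m μ = momentFormula p lam m μ := by
  set A := 1 - lam * (μ - m) ^ 2
  have hleft : ∫ z in (-1 : ℝ)..μ, (1 - lam * (z - m) ^ 2) * |z - μ| ^ p =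
      ∫ t in (0 : ℝ)..1 + μ, (A + 2 * lam * (μ - m) * t + -lam * t ^ 2) * t ^ p := by
    rw [show (1 : ℝ) + μ = μ - -1 by ring, ← sub_self μ, ← intervalIntegral.integral_comp_sub_left
      (fun t => (A + 2 * lam * (μ - m) * t + -lam * t ^ 2) * t ^ p)]
    refine intervalIntegral.integral_congr fun z hz => ?_
    rw [uIcc_of_le hμ.1] at hz
    simp only [abs_sub_comm z, abs_of_nonneg (sub_nonneg.2 hz.2), A]
    ring_nf
  have hright : ∫ z in μ..1, (1 - lam * (z - m) ^ 2) * |z - μ| ^ p =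
      ∫ t in (0 : ℝ)..1 - μ, (A + -(2 * lam * (μ - m)) * t + -lam * t ^ 2) * t ^ p := by
    rw [← sub_self μ, ← intervalIntegral.integral_comp_sub_right
      (fun t => (A + -(2 * lam * (μ - m)) * t + -lam * t ^ 2) * t ^ p)]
    refine intervalIntegral.integral_congr fun z hz => ?_
    rw [uIcc_of_le hμ.2] at hz
    simp only [abs_of_nonneg (sub_nonneg.2 hz.1), A]
    ring_nf
  rw [moment, ← intervalIntegral.integral_add_adjacent_intervals
    (intervalIntegrable_density_mul hp m μ _ _) (intervalIntegrable_density_mul hp m μ _ _),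
    hleft, hright, integral_quadratic_mul_rpow hp _ _ _ (by linarith [hμ.1]),
    integral_quadratic_mul_rpow hp _ _ _ (by linarith [hμ.2]), momentFormula]
  ring

theorem moment_neg_neg (p lam m μ : ℝ) : moment p lam (-m) (-μ) = moment p lam m μ := by
  have h := intervalIntegral.integral_comp_neg (a := -1) (b := 1)
    (fun z => (1 - lam * (z - m) ^ 2) * |z - μ| ^ p)
  rw [neg_neg] at h
  rw [moment, moment, ← h]
  congr 1 with z
  rw [show -z - m = -(z - -m) by ring, show -z - μ = -(z - -μ) by ring, neg_sq, abs_neg]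

theorem hasDerivAt_momentFormula (hp : -1 < p) (m : ℝ) {μ : ℝ} (hμ : μ ∈ Ioo (-1) 1) :
    HasDerivAt (momentFormula p lam m) (momentFormulaDeriv p lam m μ) μ := by
  have hu (q : ℝ) := hasDerivAt_one_add_rpow q hμ.1
  have hv (q : ℝ) := hasDerivAt_one_sub_rpow q hμ.2
  have hd := (((((hasDerivAt_id μ).sub_const m).pow 2).const_mul lam).const_sub 1).mul
      ((hu (p + 1)).add (hv (p + 1))) |>.div_const (p + 1)
    |>.add ((((hasDerivAt_id μ).sub_const m).const_mul (2 * lam)).mul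
      ((hu (p + 2)).sub (hv (p + 2))) |>.div_const (p + 2))
    |>.sub (((hu (p + 3)).add (hv (p + 3))).const_mul lam |>.div_const (p + 3))
  refine hd.congr_deriv ?_
  simp only [momentFormulaDeriv, id, Pi.add_apply, Pi.sub_apply, Pi.pow_apply,
    add_sub_cancel_right, show p + 2 - 1 = p + 1 by ring, show p + 3 - 1 = p + 2 by ring]
  have : p + 1 ≠ 0 := by linarith
  have : p + 2 ≠ 0 := by linarith
  have : p + 3 ≠ 0 := by linarith
  field_simp
  ring

theorem hasDerivAt_momentFormulaDeriv (hp : -1 < p) (m : ℝ) {μ : ℝ} (hμ : μ ∈ Ioo (-1) 1) :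
    HasDerivAt (momentFormulaDeriv p lam m) (momentFormulaDeriv2 p lam m μ) μ := by
  have hu (q : ℝ) := hasDerivAt_one_add_rpow q hμ.1
  have hv (q : ℝ) := hasDerivAt_one_sub_rpow q hμ.2
  have hd := (((((hasDerivAt_id μ).sub_const m).pow 2).const_mul lam).const_sub 1).mul
      ((hu p).sub (hv p))
    |>.add ((((hasDerivAt_id μ).sub_const m).const_mul (2 * lam * p / (p + 1))).mul
      ((hu (p + 1)).add (hv (p + 1))))
    |>.sub (((hu (p + 2)).sub (hv (p + 2))).const_mul (lam * p / (p + 2)))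
  refine hd.congr_deriv ?_
  simp only [momentFormulaDeriv2, id, Pi.add_apply, Pi.sub_apply, Pi.pow_apply,
    add_sub_cancel_right, show p + 2 - 1 = p + 1 by ring]
  have : p + 1 ≠ 0 := by linarith
  have : p + 2 ≠ 0 := by linarith
  field_simp
  ring

theorem momentFormulaDeriv_neg_neg (m μ : ℝ) :
    momentFormulaDeriv p lam (-m) (-μ) = -momentFormulaDeriv p lam m μ := by
  simp only [momentFormulaDeriv, sub_neg_eq_add, ← sub_eq_add_neg]
  ring

theorem momentFormulaDeriv2_zero_zero (hp : -1 < p) :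
    momentFormulaDeriv2 p lam 0 0 = 2 * p * ((p + 1) - (p - 1) * lam) / (p + 1) := by
  have : p + 1 ≠ 0 := by linarith
  simp only [momentFormulaDeriv2, add_zero, sub_zero, Real.one_rpow]
  field_simp
  ring

theorem exists_eventually_le_mul_momentFormulaDeriv2 (hp : -1 < p) (hp0 : p ≠ 0)
    (hlam0 : 0 ≤ lam) (hlam1 : lam < 1) :
    ∃ c > 0, ∀ᶠ x in 𝓝 ((0 : ℝ), (0 : ℝ)), c ≤ p * momentFormulaDeriv2 p lam x.1 x.2 := by
  have hpos : 0 < p * momentFormulaDeriv2 p lam 0 0 := by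
    rw [momentFormulaDeriv2_zero_zero hp,
      show ∀ D, p * (2 * p * D / (p + 1)) = 2 * (p * p) * D / (p + 1) by intro; ring]
    exact div_pos (mul_pos (mul_pos two_pos (mul_self_pos.2 hp0))
      (meanSlope_denom_pos hp hlam0 hlam1)) (by linarith)
  have hcont :
      ContinuousAt (fun x : ℝ × ℝ => p * momentFormulaDeriv2 p lam x.1 x.2) (0, 0) := by
    unfold momentFormulaDeriv2
    fun_prop (disch := norm_num)
  exact ⟨_, half_pos hpos,
    (hcont.eventually_const_lt (half_lt_self hpos)).mono fun _ => le_of_lt⟩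

/-- For `μ > 0` the first three terms are nonnegative, the first one uniformly positive once `μ`
stays away from `0`; the last one is `O(m)`. -/
theorem mul_momentFormulaDeriv_eq (hp : -1 < p) (m : ℝ) {μ : ℝ} (hμ : μ ∈ Ioo (-1) 1) :
    p * momentFormulaDeriv p lam m μ =
      (1 - lam + lam * (2 * μ * m - m ^ 2)) * (p * ((1 + μ) ^ p - (1 - μ) ^ p))
        + lam / (p + 1) * ((1 + μ) * (1 - μ)) * (p * ((1 + μ) ^ p - (1 - μ) ^ p))
        + lam * p ^ 2 / ((p + 1) * (p + 2)) * ((1 + μ) ^ (p + 2) - (1 - μ) ^ (p + 2))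
        - 2 * lam * p ^ 2 * m / (p + 1) * ((1 + μ) ^ (p + 1) + (1 - μ) ^ (p + 1)) := by
  have hu : 1 + μ ≠ 0 := by linarith [hμ.1]
  have hv : 1 - μ ≠ 0 := by linarith [hμ.2]
  have : p + 1 ≠ 0 := by linarith
  have : p + 2 ≠ 0 := by linarith
  have hpow (x : ℝ) (hx : x ≠ 0) : x ^ (p + 1) = x ^ p * x ∧ x ^ (p + 2) = x ^ p * x ^ 2 := by
    refine ⟨Real.rpow_add_one hx p, ?_⟩
    rw [show p + 2 = p + 1 + 1 by ring, Real.rpow_add_one hx, Real.rpow_add_one hx]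
    ring
  simp only [momentFormulaDeriv, (hpow _ hu).1, (hpow _ hu).2, (hpow _ hv).1, (hpow _ hv).2]
  field_simp
  ring

theorem sub_le_mul_momentFormulaDeriv (hp : -1 < p) (hlam0 : 0 ≤ lam) {r m μ : ℝ} (hr : 0 < r)
    (hm : |m| < 1) (hcoef : 0 ≤ 1 - lam - 3 * lam * |m|) (hμ : μ ∈ Ico r 1) :
    (1 - lam - 3 * lam * |m|) * (p * (1 + r) ^ p - p)
      - 2 * lam * p ^ 2 / (p + 1) * (2 ^ (p + 1) + 1) * |m|
      ≤ p * momentFormulaDeriv p lam m μ := by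
  have hu : 0 < 1 + μ := by linarith [hμ.1]
  have hv : 0 < 1 - μ := by linarith [hμ.2]
  have hp1 : 0 < p + 1 := by linarith
  have hP : p * (1 + r) ^ p - p ≤ p * ((1 + μ) ^ p - (1 - μ) ^ p) := by
    have h1 := mul_rpow_le_mul_rpow (p := p) (a := 1 + r) (b := 1 + μ) (by linarith)
      (by linarith [hμ.1])
    have h2 := mul_rpow_le_mul_rpow (p := p) hv (by linarith [hμ.1] : 1 - μ ≤ 1)
    rw [Real.one_rpow, mul_one] at h2
    linarith
  have hδ : 0 ≤ p * (1 + r) ^ p - p := by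
    have := mul_rpow_le_mul_rpow (p := p) one_pos (by linarith : (1 : ℝ) ≤ 1 + r)
    rw [Real.one_rpow, mul_one] at this
    linarith
  have hT1 : (1 - lam - 3 * lam * |m|) * (p * (1 + r) ^ p - p) ≤
      (1 - lam + lam * (2 * μ * m - m ^ 2)) * (p * ((1 + μ) ^ p - (1 - μ) ^ p)) := by
    have hμm : |μ * m| ≤ |m| := by
      rw [abs_mul]
      exact mul_le_of_le_one_left (abs_nonneg m) (abs_le.2 ⟨by linarith [hμ.1], hμ.2.le⟩)
    have hm2 : m ^ 2 ≤ |m| := by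
      rw [← sq_abs]
      nlinarith [abs_nonneg m]
    have hc : -(3 * |m|) ≤ 2 * μ * m - m ^ 2 := by linarith [neg_abs_le (μ * m)]
    have hc' := mul_le_mul_of_nonneg_left hc hlam0
    exact mul_le_mul (by linarith) hP hδ (by linarith)
  have hT2 : 0 ≤ lam / (p + 1) * ((1 + μ) * (1 - μ)) * (p * ((1 + μ) ^ p - (1 - μ) ^ p)) :=
    mul_nonneg (by positivity) (by linarith)
  have hT3 :
      0 ≤ lam * p ^ 2 / ((p + 1) * (p + 2)) * ((1 + μ) ^ (p + 2) - (1 - μ) ^ (p + 2)) := by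
    have : 0 < p + 2 := by linarith
    exact mul_nonneg (by positivity)
      (sub_nonneg.2 (Real.rpow_le_rpow hv.le (by linarith [hμ.1]) (by linarith)))
  have hT4 : 2 * lam * p ^ 2 * m / (p + 1) * ((1 + μ) ^ (p + 1) + (1 - μ) ^ (p + 1))
      ≤ 2 * lam * p ^ 2 / (p + 1) * (2 ^ (p + 1) + 1) * |m| := by
    have hS : (1 + μ) ^ (p + 1) + (1 - μ) ^ (p + 1) ≤ 2 ^ (p + 1) + 1 :=
      add_le_add (Real.rpow_le_rpow hu.le (by linarith [hμ.2]) (by linarith))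
        (Real.rpow_le_one hv.le (by linarith [hμ.1]) (by linarith))
    have hS0 : 0 ≤ (1 + μ) ^ (p + 1) + (1 - μ) ^ (p + 1) := by positivity
    calc 2 * lam * p ^ 2 * m / (p + 1) * ((1 + μ) ^ (p + 1) + (1 - μ) ^ (p + 1))
        ≤ 2 * lam * p ^ 2 * |m| / (p + 1) * ((1 + μ) ^ (p + 1) + (1 - μ) ^ (p + 1)) := by
          gcongr; exact le_abs_self m
      _ ≤ 2 * lam * p ^ 2 * |m| / (p + 1) * (2 ^ (p + 1) + 1) := by gcongr
      _ = 2 * lam * p ^ 2 / (p + 1) * (2 ^ (p + 1) + 1) * |m| := by ring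
  rw [mul_momentFormulaDeriv_eq hp m ⟨by linarith [hμ.1], hμ.2⟩]
  linarith

theorem eventually_pos_mul_momentFormulaDeriv (hp : -1 < p) (hp0 : p ≠ 0) (hlam0 : 0 ≤ lam)
    (hlam1 : lam < 1) {r : ℝ} (hr : 0 < r) :
    ∀ᶠ m in 𝓝 0, ∀ μ ∈ Ico r 1, 0 < p * momentFormulaDeriv p lam m μ := by
  set δ := p * (1 + r) ^ p - p
  have hδ : 0 < δ := by
    have := mul_rpow_lt_mul_rpow hp0 one_pos (by linarith : (1 : ℝ) < 1 + r)
    rw [Real.one_rpow, mul_one] at this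
    linarith
  set M := 2 * lam * p ^ 2 / (p + 1) * (2 ^ (p + 1) + 1)
  have h1 : ∀ᶠ m in 𝓝 (0 : ℝ), |m| < 1 :=
    (continuous_abs.tendsto' 0 0 abs_zero).eventually_lt_const one_pos
  have h2 : ∀ᶠ m in 𝓝 (0 : ℝ), 0 < 1 - lam - 3 * lam * |m| :=
    (Continuous.tendsto' (by fun_prop) 0 (1 - lam) (by simp)).eventually_const_lt
      (by linarith)
  have h3 : ∀ᶠ m in 𝓝 (0 : ℝ), 0 < (1 - lam - 3 * lam * |m|) * δ - M * |m| :=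
    (Continuous.tendsto' (by fun_prop) 0 ((1 - lam) * δ) (by simp)).eventually_const_lt
      (mul_pos (by linarith) hδ)
  filter_upwards [h1, h2, h3] with m h1 h2 h3 μ hμ
  linarith [sub_le_mul_momentFormulaDeriv hp hlam0 hr h1 h2.le hμ]

/-- This is the equation that determines the leading coefficient `meanSlope p lam`. -/
theorem hasDerivAt_momentFormulaDeriv_meanSlope_zero (hp : -1 < p)
    (hD : (p + 1) - (p - 1) * lam ≠ 0) :
    HasDerivAt (fun m => momentFormulaDeriv p lam m (meanSlope p lam * m)) 0 0 := by
  set κ := meanSlope p lam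
  have hline : HasDerivAt (fun t : ℝ => κ * t) κ 0 := by
    simpa using (hasDerivAt_id 0).const_mul κ
  have hu (q : ℝ) : HasDerivAt (fun t => (1 + κ * t) ^ q) (κ * q) 0 := by
    simpa using (hline.const_add 1).rpow_const (p := q) (Or.inl (by simp))
  have hv (q : ℝ) : HasDerivAt (fun t => (1 - κ * t) ^ q) (-(κ * q)) 0 := by
    simpa using (hline.const_sub 1).rpow_const (p := q) (Or.inl (by simp))
  have hd := ((((hline.sub (hasDerivAt_id 0)).fun_pow 2).const_mul lam).const_sub 1).mul
      ((hu p).sub (hv p))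
    |>.add (((hline.sub (hasDerivAt_id 0)).const_mul (2 * lam * p / (p + 1))).mul
      ((hu (p + 1)).add (hv (p + 1))))
    |>.sub (((hu (p + 2)).sub (hv (p + 2))).const_mul (lam * p / (p + 2)))
  refine hd.congr_deriv ?_
  have : p + 1 ≠ 0 := by linarith
  have : p + 2 ≠ 0 := by linarith
  have hκ : κ * ((p + 1) - (p - 1) * lam) = 2 * lam := div_mul_cancel₀ _ hD
  simp only [id, Pi.add_apply, Pi.sub_apply, mul_zero, sub_zero, add_zero, Real.one_rpow,
    sub_self]
  field_simp
  linear_combination (2 * p) * hκ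

theorem isBigO_momentFormulaDeriv_meanSlope (hp : -1 < p) (hD : (p + 1) - (p - 1) * lam ≠ 0) :
    (fun m => momentFormulaDeriv p lam m (meanSlope p lam * m)) =O[𝓝 0] (· ^ 3) := by
  set κ := meanSlope p lam
  refine Function.Odd.isBigO_pow_three (s := (fun m => κ * m) ⁻¹' Ioo (-1) 1) (fun m => ?_)
    (isOpen_Ioo.preimage (by fun_prop)) (by simp) (fun m hm => ?_)
    (hasDerivAt_momentFormulaDeriv_meanSlope_zero hp hD).deriv
  · simp only [mul_neg, ← momentFormulaDeriv_neg_neg]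
  · have h1 : 1 + κ * m ≠ 0 := by have := hm.1; intro h; linarith
    have h2 : 1 - κ * m ≠ 0 := by have := hm.2; intro h; linarith
    refine ContDiffAt.contDiffWithinAt ?_
    unfold momentFormulaDeriv
    fun_prop (disch := assumption)

theorem add_mul_sub_le_mul_momentFormulaDeriv (hp : -1 < p) {r c m a b : ℝ} (hr : r ≤ 1)
    (hc : ∀ y ∈ Ioo (-r) r, c ≤ p * momentFormulaDeriv2 p lam m y) (ha : a ∈ Ioo (-r) r)
    (hb : b ∈ Ioo (-r) r) (hab : a ≤ b) :
    p * momentFormulaDeriv p lam m a + c * (b - a) ≤ p * momentFormulaDeriv p lam m b := by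
  have hderiv : ∀ y ∈ Ioo (-r) r, HasDerivAt
      (fun y => p * momentFormulaDeriv p lam m y - c * y)
      (p * momentFormulaDeriv2 p lam m y - c) y := fun y hy => by
    simpa using ((hasDerivAt_momentFormulaDeriv hp m
      ⟨by linarith [hy.1], by linarith [hy.2]⟩).const_mul p).fun_sub
      ((hasDerivAt_id y).const_mul c)
  have hmono : MonotoneOn (fun y => p * momentFormulaDeriv p lam m y - c * y) (Ioo (-r) r) :=
    monotoneOn_of_hasDerivWithinAt_nonneg (convex_Ioo _ _)
      (fun y hy => (hderiv y hy).continuousAt.continuousWithinAt)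
      (fun y hy => (hderiv y (interior_subset hy)).hasDerivWithinAt)
      fun y hy => by linarith [hc y (interior_subset hy)]
  linarith [hmono ha hb hab]

theorem exists_pos_mul_momentFormulaDeriv (hp : -1 < p) (hp0 : p ≠ 0) (hlam0 : 0 ≤ lam)
    (hlam1 : lam < 1) :
    ∃ C > 0, ∀ᶠ m in 𝓝 0, m ≠ 0 → ∀ μ ∈ Ico (meanSlope p lam * m + C * |m| ^ 3) 1,
      0 < p * momentFormulaDeriv p lam m μ := by
  set κ := meanSlope p lam
  obtain ⟨c, hc, hnear⟩ := exists_eventually_le_mul_momentFormulaDeriv2 hp hp0 hlam0 hlam1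
  obtain ⟨ε, hε, hball⟩ := Metric.eventually_nhds_iff.mp hnear
  set r := min ε 1
  have hr : 0 < r := lt_min hε one_pos
  obtain ⟨K, hK⟩ := ((isBigO_momentFormulaDeriv_meanSlope hp
    (meanSlope_denom_pos hp hlam0 hlam1).ne').const_mul_left p).bound
  refine ⟨(|K| + 1) / c, by positivity, ?_⟩
  have hm : ∀ᶠ m in 𝓝 (0 : ℝ), |m| < r :=
    (continuous_abs.tendsto' 0 0 abs_zero).eventually_lt_const hr
  have hκm : ∀ᶠ m in 𝓝 (0 : ℝ), |κ * m| < r :=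
    (Continuous.tendsto' (by fun_prop) 0 0 (by simp)).eventually_lt_const hr
  filter_upwards [hm, hκm, hK, eventually_pos_mul_momentFormulaDeriv hp hp0 hlam0 hlam1 hr]
    with m hm hκm hK houter hm0 μ hμ
  rcases le_or_gt r μ with hrμ | hμr
  · exact houter μ ⟨hrμ, hμ.2⟩
  have hnear' : ∀ y ∈ Ioo (-r) r, c ≤ p * momentFormulaDeriv2 p lam m y := fun y hy =>
    hball (y := (m, y)) (by
      simp only [Prod.dist_eq, Real.dist_eq, sub_zero, max_lt_iff]
      exact ⟨hm.trans_le (min_le_left _ _), (abs_lt.2 hy).trans_le (min_le_left _ _)⟩)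
  have hC : 0 ≤ (|K| + 1) / c * |m| ^ 3 := by positivity
  have hstep := add_mul_sub_le_mul_momentFormulaDeriv hp (min_le_right ε 1) hnear'
    (abs_lt.1 hκm) ⟨by linarith [hμ.1, (abs_lt.1 hκm).1], hμr⟩ (by linarith [hμ.1])
  have hK' : -(K * |m| ^ 3) ≤ p * momentFormulaDeriv p lam m (κ * m) := by
    simp only [norm_mul, Real.norm_eq_abs, abs_pow] at hK
    linarith [neg_abs_le (p * momentFormulaDeriv p lam m (κ * m)),
      abs_mul p (momentFormulaDeriv p lam m (κ * m))]
  have hm3 : 0 < |m| ^ 3 := by positivity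
  have hcC : c * ((|K| + 1) / c * |m| ^ 3) = (|K| + 1) * |m| ^ 3 := by field_simp
  have hgain : c * ((|K| + 1) / c * |m| ^ 3) ≤ c * (μ - κ * m) :=
    mul_le_mul_of_nonneg_left (by linarith [hμ.1]) hc.le
  linarith [mul_le_mul_of_nonneg_right (le_abs_self K) hm3.le]

theorem density_nonneg (hlam0 : 0 ≤ lam) {m : ℝ} (hm : lam * (1 + |m|) ^ 2 ≤ 1) {z : ℝ}
    (hz : z ∈ Icc (-1) 1) : 0 ≤ 1 - lam * (z - m) ^ 2 := by
  have : (z - m) ^ 2 ≤ (1 + |m|) ^ 2 := by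
    rw [← sq_abs]
    exact pow_le_pow_left₀ (abs_nonneg _) ((abs_sub _ _).trans (by linarith [abs_le.2 hz])) 2
  nlinarith [mul_le_mul_of_nonneg_left this hlam0]

theorem mul_moment_one_le (hp : -1 < p) (hlam0 : 0 ≤ lam) {m : ℝ}
    (hm : lam * (1 + |m|) ^ 2 ≤ 1) {ν : ℝ} (hν : 1 ≤ ν) :
    p * moment p lam m 1 ≤ p * moment p lam m ν := by
  rw [moment, moment, ← intervalIntegral.integral_const_mul,
    ← intervalIntegral.integral_const_mul]
  refine intervalIntegral.integral_mono_on_of_le_Ioo (by norm_num)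
    ((intervalIntegrable_density_mul hp m 1 _ _).const_mul p)
    ((intervalIntegrable_density_mul hp m ν _ _).const_mul p) fun z hz => ?_
  have h1z : 0 < 1 - z := by linarith [hz.2]
  rw [abs_sub_comm, abs_of_pos h1z, abs_sub_comm, abs_of_pos (by linarith)]
  have := mul_le_mul_of_nonneg_left
    (mul_rpow_le_mul_rpow (p := p) h1z (by linarith : 1 - z ≤ ν - z))
    (density_nonneg hlam0 hm (Ioo_subset_Icc_self hz))
  linarith

theorem strictMonoOn_mul_momentFormula (hp : -1 < p) {m β : ℝ} (hβ : -1 < β)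
    (hpos : ∀ μ ∈ Ico β 1, 0 < p * momentFormulaDeriv p lam m μ) :
    StrictMonoOn (fun μ => p * momentFormula p lam m μ) (Icc β 1) := by
  have hcont : Continuous (fun μ => p * momentFormula p lam m μ) := by
    unfold momentFormula
    fun_prop (disch := intros; linarith)
  refine strictMonoOn_of_hasDerivWithinAt_pos
    (f' := fun μ => p * momentFormulaDeriv p lam m μ) (convex_Icc β 1) hcont.continuousOn
    (fun μ hμ => ?_) fun μ hμ => ?_
  · rw [interior_Icc] at hμ
    exact ((hasDerivAt_momentFormula hp m ⟨by linarith [hμ.1], hμ.2⟩).const_mul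
      p).hasDerivWithinAt
  · rw [interior_Icc] at hμ
    exact hpos μ ⟨hμ.1.le, hμ.2⟩

theorem exists_le_of_forall_mul_moment_le (hp : -1 < p) (hp0 : p ≠ 0) (hlam0 : 0 ≤ lam)
    (hlam1 : lam < 1) :
    ∃ C > 0, ∀ᶠ m in 𝓝 0, m ≠ 0 → ∀ μ, (∀ ν, p * moment p lam m μ ≤ p * moment p lam m ν) →
      μ ≤ meanSlope p lam * m + C * |m| ^ 3 := by
  obtain ⟨C, hC, hpos⟩ := exists_pos_mul_momentFormulaDeriv hp hp0 hlam0 hlam1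
  refine ⟨C, hC, ?_⟩
  have hβ : ∀ᶠ m in 𝓝 (0 : ℝ), meanSlope p lam * m + C * |m| ^ 3 ∈ Ioo (-1) 1 :=
    (Continuous.tendsto' (by fun_prop) 0 0 (by simp)).eventually
      (Ioo_mem_nhds (by norm_num) one_pos)
  have hγ : ∀ᶠ m in 𝓝 (0 : ℝ), lam * (1 + |m|) ^ 2 ≤ 1 :=
    ((Continuous.tendsto' (by fun_prop) 0 lam (by simp)).eventually_lt_const hlam1).mono
      fun _ => le_of_lt
  filter_upwards [hpos, hβ, hγ] with m hpos hβ hγ hm0 μ hmin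
  set β := meanSlope p lam * m + C * |m| ^ 3
  by_contra! hβμ
  have hlt : p * moment p lam m β < p * moment p lam m (min μ 1) := by
    rw [moment_eq_momentFormula hp m ⟨hβ.1.le, hβ.2.le⟩,
      moment_eq_momentFormula hp m ⟨by linarith [hβ.1, le_min hβμ.le hβ.2.le], min_le_right _ _⟩]
    exact strictMonoOn_mul_momentFormula hp hβ.1 (hpos hm0) ⟨le_rfl, hβ.2.le⟩
      ⟨le_min hβμ.le hβ.2.le, min_le_right _ _⟩ (lt_min hβμ hβ.2)
  have htail : p * moment p lam m (min μ 1) ≤ p * moment p lam m μ := by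
    rcases le_total μ 1 with hμ | hμ
    · rw [min_eq_left hμ]
    · rw [min_eq_right hμ]
      exact mul_moment_one_le hp hlam0 hγ hμ
  linarith [hmin β]

theorem exists_abs_sub_le_of_forall_mul_moment_le (hp : -1 < p) (hp0 : p ≠ 0)
    (hlam0 : 0 ≤ lam) (hlam1 : lam < 1) :
    ∃ C > 0, ∀ᶠ m in 𝓝 0, m ≠ 0 → ∀ μ, (∀ ν, p * moment p lam m μ ≤ p * moment p lam m ν) →
      |μ - meanSlope p lam * m| ≤ C * |m| ^ 3 := by
  obtain ⟨C, hC, h⟩ := exists_le_of_forall_mul_moment_le hp hp0 hlam0 hlam1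
  refine ⟨C, hC, ?_⟩
  filter_upwards [h, (continuous_neg.tendsto' 0 0 neg_zero).eventually h]
    with m hright hleft hm0 μ hmin
  have hup := hright hm0 μ hmin
  have hlow := hleft (neg_ne_zero.2 hm0) (-μ) fun ν => by
    have := hmin (-ν)
    rwa [← moment_neg_neg p lam m μ, ← moment_neg_neg p lam m (-ν), neg_neg] at this
  rw [abs_neg] at hlow
  exact abs_sub_le_iff.2 ⟨by linarith, by linarith⟩

end QuadraticDensity

end

open QuadraticDensity

/-- For the toy density `γ(z) = 1 − λ(z−m)²` on `[−1,1]` with mode `m`, the order-`p` mean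
is `2λm/((p+1) − (p−1)λ) + O(m³)`; the leading coefficient tends to `1` as `p → −1⁺`
(the order-`p` mean approaches the mode) and to `2λ/(1+λ) < 1` as `p → 0`
(the order-`p` mean does not approach the mode). -/
theorem stmt13 (p lam : ℝ) (hp : -1 < p) (hp0 : p ≠ 0)
    (hlam0 : 0 < lam) (hlam1 : lam < 1) :
    (∃ m₀ > (0:ℝ), ∃ C > (0:ℝ), ∀ m : ℝ, 0 < m → m < m₀ →
      lam * (1 + m) ^ 2 ≤ 1 ∧
      ∀ μstar : ℝ,
        (∀ ν : ℝ,
          Real.sign p * ∫ z in (-1 : ℝ)..1, (1 - lam * (z - m) ^ 2) * |z - μstar| ^ p ≤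
            Real.sign p * ∫ z in (-1 : ℝ)..1, (1 - lam * (z - m) ^ 2) * |z - ν| ^ p) →
        |μstar - 2 * lam * m / ((p + 1) - (p - 1) * lam)| ≤ C * m ^ 3) ∧
    Tendsto (fun q : ℝ => 2 * lam / ((q + 1) - (q - 1) * lam))
      (nhdsWithin (-1) (Set.Ioi (-1))) (nhds 1) ∧
    Tendsto (fun q : ℝ => 2 * lam / ((q + 1) - (q - 1) * lam))
      (nhdsWithin 0 {(0:ℝ)}ᶜ) (nhds (2 * lam / (1 + lam))) ∧
    2 * lam / (1 + lam) < 1 := by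
  obtain ⟨C, hC, hmin⟩ := exists_abs_sub_le_of_forall_mul_moment_le hp hp0 hlam0.le hlam1
  have hγ : ∀ᶠ m in 𝓝 (0 : ℝ), lam * (1 + m) ^ 2 < 1 :=
    (Continuous.tendsto' (by fun_prop) 0 lam (by simp)).eventually_lt_const hlam1
  obtain ⟨ε, hε, hball⟩ := Metric.eventually_nhds_iff.mp (hmin.and hγ)
  refine ⟨⟨ε, hε, C, hC, fun m hm hmε => ?_⟩, ?_, ?_, (div_lt_one (by linarith)).2 (by linarith)⟩
  · obtain ⟨hmin, hγ⟩ := hball (by rwa [Real.dist_eq, sub_zero, abs_of_pos hm])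
    refine ⟨hγ.le, fun μ hμ => ?_⟩
    have := hmin hm.ne' μ fun ν => (sign_mul_le_sign_mul_iff hp0).1 (hμ ν)
    rwa [abs_of_pos hm, meanSlope, div_mul_eq_mul_div] at this
  · have h := (continuousAt_meanSlope (lam := lam) (q := -1) (by linarith)).tendsto
    rw [show meanSlope (-1) lam = 1 by rw [meanSlope, div_eq_one_iff_eq (by linarith)]; ring] at h
    exact h.mono_left nhdsWithin_le_nhds
  · have h := (continuousAt_meanSlope (lam := lam) (q := 0) (by linarith)).tendsto
    rw [show meanSlope 0 lam = 2 * lam / (1 + lam) by rw [meanSlope]; ring_nf] at h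
    exact h.mono_left nhdsWithin_le_nhds
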